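/- arXiv:1912.00168 — 2 statements merged into one kernel-verified Lean document; each statement's English description precedes it below -/
import Mathlib

section
/- Fix δ with 0 < δ < d1 − d0 and define the energy E(t) = V(t) + (1/2)·Σ_{1≤j<i≤k} ∫_{‖x_i(t) − x_j(t)‖²}^{d1 − δ} (f0(r) − f1(r)) dr. If for every s ∈ [0, t] one has V(s) > 0 and d0 < ‖x_i(s) − x_j(s)‖² < d1 for all i ≠ j, then E(t) ≤ E(0); that is, E is nonincreasing along the solution of the flocking dynamics. -/
/-!
Along the flow, the velocity spread `V` has derivative `(∑ᵢ ⟪vᵢ - v̄, v̇ᵢ⟫) / V`. By symmetry of the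
weights, the alignment term contributes `-∑_{j<i} aᵢⱼ ‖vᵢ - vⱼ‖² / V` and the two pairwise forces
contribute `(Λ / V) ∑_{j<i} (f0 - f1)(rᵢⱼ) ⟪vᵢ - vⱼ, xᵢ - xⱼ⟫`, where `rᵢⱼ = ‖xᵢ - xⱼ‖²`. The mean
pairwise squared velocity difference equals the variance, so `Λ = V`, and the force term is then
exactly cancelled by the derivative of the potential part of the energy. Hence
`E' = -∑_{j<i} aᵢⱼ ‖vᵢ - vⱼ‖² / V ≤ 0` as long as `V > 0` and the distances stay in `(d0, d1)`,
where the integrand `f0 - f1` is continuous.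
-/

open Finset Set
open scoped RealInnerProductSpace

section PairSums

variable {ι : Type*} [Fintype ι] [LinearOrder ι]

lemma sum_sum_eq_sum_sum_lt_add {M : Type*} [AddCommMonoid M] (φ : ι → ι → M)
    (hφ : ∀ i, φ i i = 0) :
    ∑ i, ∑ j, φ i j = ∑ i, ∑ j ∈ univ.filter (· < i), (φ i j + φ j i) := by
  have hsplit : ∀ i, ∑ j, φ i j
      = ∑ j ∈ univ.filter (· < i), φ i j + ∑ j ∈ univ.filter (i < ·), φ i j := by
    intro i
    have hge : univ.filter (¬ · < i) = insert i (univ.filter (i < ·)) := by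
      ext j
      simp [not_lt, le_iff_lt_or_eq, or_comm, eq_comm]
    rw [← sum_filter_add_sum_filter_not univ (· < i), hge, sum_insert (by simp), hφ, zero_add]
  have hswap : ∑ i, ∑ j ∈ univ.filter (i < ·), φ i j = ∑ i, ∑ j ∈ univ.filter (· < i), φ j i :=
    sum_comm' (by simp)
  simp only [hsplit, sum_add_distrib, hswap]

variable {F : Type*} [NormedAddCommGroup F] [InnerProductSpace ℝ F]

lemma sum_inner_sum_smul_sub_of_symm (u : ι → F) (c : F) (a : ι → ι → ℝ)
    (ha : ∀ i j, a i j = a j i) :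
    ∑ i, ⟪u i - c, ∑ j, a i j • (u j - u i)⟫
      = -∑ i, ∑ j ∈ univ.filter (· < i), a i j * ‖u i - u j‖ ^ 2 := by
  simp only [inner_sum, real_inner_smul_right]
  rw [sum_sum_eq_sum_sum_lt_add (fun i j => a i j * ⟪u i - c, u j - u i⟫) (by simp)]
  simp only [← sum_neg_distrib]
  refine sum_congr rfl fun i _ => sum_congr rfl fun j _ => ?_
  rw [ha j i, ← mul_add, ← neg_sub (u i) (u j), inner_neg_right, neg_add_eq_sub,
    ← inner_sub_left, sub_sub_sub_cancel_right, ← neg_sub (u i) (u j), inner_neg_left,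
    real_inner_self_eq_norm_sq, mul_neg]

lemma sum_inner_sum_ne_smul_sub (u x : ι → F) (c : F) (g : ℝ → ℝ) :
    ∑ i, ⟪u i - c, ∑ j ∈ univ.filter (· ≠ i), g (‖x i - x j‖ ^ 2) • (x i - x j)⟫
      = ∑ i, ∑ j ∈ univ.filter (· < i), g (‖x i - x j‖ ^ 2) * ⟪u i - u j, x i - x j⟫ := by
  have hdiag : ∀ i, ∑ j ∈ univ.filter (· ≠ i), g (‖x i - x j‖ ^ 2) • (x i - x j)
      = ∑ j, g (‖x i - x j‖ ^ 2) • (x i - x j) := by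
    intro i
    rw [filter_ne', sum_erase]
    simp
  simp only [hdiag, inner_sum, real_inner_smul_right]
  rw [sum_sum_eq_sum_sum_lt_add (fun i j => g (‖x i - x j‖ ^ 2) * ⟪u i - c, x i - x j⟫)
    (by simp)]
  refine sum_congr rfl fun i _ => sum_congr rfl fun j _ => ?_
  rw [norm_sub_rev (x j), ← neg_sub (x i) (x j), inner_neg_right, ← mul_add, ← sub_eq_add_neg,
    ← inner_sub_left, sub_sub_sub_cancel_right]

lemma sum_inner_flocking_accel (x v : ι → F) (c : F) (a : ι → ι → ℝ)
    (ha : ∀ i j, a i j = a j i) (Λ : ℝ) (f0 f1 : ℝ → ℝ) :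
    ∑ i, ⟪v i - c, (∑ j, a i j • (v j - v i)) +
        Λ • (∑ j ∈ univ.filter (· ≠ i), f0 (‖x i - x j‖ ^ 2) • (x i - x j)) +
        Λ • (∑ j ∈ univ.filter (· ≠ i), f1 (‖x i - x j‖ ^ 2) • (x j - x i))⟫
      = -∑ i, ∑ j ∈ univ.filter (· < i), a i j * ‖v i - v j‖ ^ 2 +
        Λ * ∑ i, ∑ j ∈ univ.filter (· < i),
          (f0 (‖x i - x j‖ ^ 2) - f1 (‖x i - x j‖ ^ 2)) * ⟪v i - v j, x i - x j⟫ := by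
  have hforces : ∀ i, Λ • (∑ j ∈ univ.filter (· ≠ i), f0 (‖x i - x j‖ ^ 2) • (x i - x j)) +
      Λ • (∑ j ∈ univ.filter (· ≠ i), f1 (‖x i - x j‖ ^ 2) • (x j - x i))
      = Λ • ∑ j ∈ univ.filter (· ≠ i),
          (fun r => f0 r - f1 r) (‖x i - x j‖ ^ 2) • (x i - x j) := by
    intro i
    rw [← smul_add, ← sum_add_distrib]
    congr 1
    refine sum_congr rfl fun j _ => ?_
    rw [← neg_sub (x i), smul_neg, sub_smul, ← sub_eq_add_neg]
  simp only [add_assoc, hforces, inner_add_right, real_inner_smul_right, sum_add_distrib,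
    ← mul_sum, sum_inner_sum_smul_sub_of_symm v c a ha]
  rw [sum_inner_sum_ne_smul_sub v x c (fun r => f0 r - f1 r)]

end PairSums

section Variance

variable {ι : Type*} [Fintype ι] {F : Type*} [NormedAddCommGroup F] [InnerProductSpace ℝ F]

lemma sum_sub_average_eq_zero (u : ι → F) :
    ∑ i, (u i - (Fintype.card ι : ℝ)⁻¹ • ∑ j, u j) = 0 := by
  rw [sum_sub_distrib, sum_const, card_univ, ← Nat.cast_smul_eq_nsmul ℝ, smul_smul]
  rcases isEmpty_or_nonempty ι with hι | hι
  · simp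
  · rw [mul_inv_cancel₀ (by simp [Fintype.card_ne_zero]), one_smul, sub_self]

lemma sum_sum_lt_norm_sub_sq_of_sum_eq_zero [LinearOrder ι] (w : ι → F) (hw : ∑ i, w i = 0) :
    ∑ i, ∑ j ∈ univ.filter (· < i), ‖w i - w j‖ ^ 2 = Fintype.card ι * ∑ i, ‖w i‖ ^ 2 := by
  have hfull : ∑ i, ∑ j, ‖w i - w j‖ ^ 2 = 2 * (Fintype.card ι * ∑ i, ‖w i‖ ^ 2) := by
    simp only [norm_sub_sq_real, sum_add_distrib, sum_sub_distrib, ← mul_sum, ← inner_sum, hw,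
      inner_zero_right, mul_zero, sum_const, card_univ, nsmul_eq_mul, sub_zero]
    ring
  rw [sum_sum_eq_sum_sum_lt_add (fun i j => ‖w i - w j‖ ^ 2) (by simp)] at hfull
  have hsymm : ∀ i j, ‖w i - w j‖ ^ 2 + ‖w j - w i‖ ^ 2 = 2 * ‖w i - w j‖ ^ 2 := fun i j => by
    rw [norm_sub_rev (w j), two_mul]
  simp only [hsymm, ← mul_sum] at hfull
  linarith

lemma inv_card_mul_sum_sum_lt_norm_sub_sq [LinearOrder ι] (u : ι → F) :
    (Fintype.card ι : ℝ)⁻¹ * ∑ i, ∑ j ∈ univ.filter (· < i), ‖u i - u j‖ ^ 2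
      = ∑ i, ‖u i - (Fintype.card ι : ℝ)⁻¹ • ∑ j, u j‖ ^ 2 := by
  set w := fun i => u i - (Fintype.card ι : ℝ)⁻¹ • ∑ j, u j
  have huw : ∀ i j, u i - u j = w i - w j := fun i j => (sub_sub_sub_cancel_right _ _ _).symm
  simp only [huw, sum_sum_lt_norm_sub_sq_of_sum_eq_zero w (sum_sub_average_eq_zero u)]
  rcases isEmpty_or_nonempty ι with hι | hι
  · simp
  · rw [inv_mul_cancel_left₀ (by simp [Fintype.card_ne_zero])]

end Variance

section Derivatives

variable {ι : Type*} [Fintype ι] {F : Type*} [NormedAddCommGroup F] [InnerProductSpace ℝ F]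

lemma HasDerivAt.sqrt_sum_norm_sub_average_sq {v : ι → ℝ → F} {A : ι → F} {s : ℝ}
    (hv : ∀ i, HasDerivAt (v i) (A i) s)
    (hpos : 0 < ∑ i, ‖v i s - (Fintype.card ι : ℝ)⁻¹ • ∑ j, v j s‖ ^ 2) :
    HasDerivAt (fun u => √(∑ i, ‖v i u - (Fintype.card ι : ℝ)⁻¹ • ∑ j, v j u‖ ^ 2))
      ((∑ i, ⟪v i s - (Fintype.card ι : ℝ)⁻¹ • ∑ j, v j s, A i⟫)
        / √(∑ i, ‖v i s - (Fintype.card ι : ℝ)⁻¹ • ∑ j, v j s‖ ^ 2)) s := by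
  set Ā := (Fintype.card ι : ℝ)⁻¹ • ∑ j, A j
  have hw : ∀ i, HasDerivAt (fun u => v i u - (Fintype.card ι : ℝ)⁻¹ • ∑ j, v j u) (A i - Ā) s :=
    fun i => (hv i).sub ((HasDerivAt.fun_sum fun j _ => hv j).const_smul _)
  have hmean : ∑ i, ⟪v i s - (Fintype.card ι : ℝ)⁻¹ • ∑ j, v j s, Ā⟫ = 0 := by
    rw [← sum_inner, sum_sub_average_eq_zero, inner_zero_left]
  convert (HasDerivAt.fun_sum fun i _ => (hw i).norm_sq).sqrt hpos.ne' using 1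
  simp only [inner_sub_right, sum_sub_distrib, hmean, sub_zero, ← mul_sum]
  field_simp

lemma HasDerivAt.intervalIntegral_lower {h : ℝ → ℝ} {a b c : ℝ}
    (hh : ContinuousOn h (Ioo a b)) (hc : c ∈ Ioo a b) {g : ℝ → ℝ} {g' s : ℝ}
    (hg : HasDerivAt g g' s) (hgs : g s ∈ Ioo a b) :
    HasDerivAt (fun u => ∫ r in g u..c, h r) (-h (g s) * g') s := by
  have hnhds : Ioo a b ∈ nhds (g s) := Ioo_mem_nhds hgs.1 hgs.2
  have hint : IntervalIntegrable h MeasureTheory.volume (g s) c :=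
    (hh.mono (ordConnected_Ioo.uIcc_subset hgs hc)).intervalIntegrable
  exact (intervalIntegral.integral_hasDerivAt_left hint
    ⟨_, hnhds, hh.aestronglyMeasurable measurableSet_Ioo⟩ (hh.continuousAt hnhds)).comp s hg

lemma hasDerivAt_sum_sum_lt_intervalIntegral [LinearOrder ι] {x v : ι → ℝ → F} {h : ℝ → ℝ}
    {a b c s : ℝ} (hh : ContinuousOn h (Ioo a b)) (hc : c ∈ Ioo a b)
    (hx : ∀ i, HasDerivAt (x i) (v i s) s)
    (hxs : ∀ i j, i ≠ j → ‖x i s - x j s‖ ^ 2 ∈ Ioo a b) :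
    HasDerivAt (fun u => ∑ i, ∑ j ∈ univ.filter (· < i), ∫ r in (‖x i u - x j u‖ ^ 2)..c, h r)
      (-2 * ∑ i, ∑ j ∈ univ.filter (· < i),
        h (‖x i s - x j s‖ ^ 2) * ⟪v i s - v j s, x i s - x j s⟫) s := by
  simp only [mul_sum]
  refine HasDerivAt.fun_sum fun i _ => HasDerivAt.fun_sum fun j hj => ?_
  have hij : i ≠ j := (mem_filter.1 hj).2.ne'
  refine (((hx i).sub (hx j)).norm_sq.intervalIntegral_lower hh hc (hxs i j hij)).congr_deriv ?_
  rw [Pi.sub_apply, real_inner_comm]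
  ring

lemma le_of_hasDerivAt_nonpos {f f' : ℝ → ℝ} {a b : ℝ} (hab : a ≤ b)
    (hf : ∀ s ∈ Icc a b, HasDerivAt f (f' s) s) (hf' : ∀ s ∈ Icc a b, f' s ≤ 0) :
    f b ≤ f a :=
  antitoneOn_of_hasDerivWithinAt_nonpos (convex_Icc a b)
    (fun s hs => (hf s hs).continuousAt.continuousWithinAt)
    (fun s hs => (hf s (interior_subset hs)).hasDerivWithinAt)
    (fun s hs => hf' s (interior_subset hs)) (left_mem_Icc.2 hab) (right_mem_Icc.2 hab) hab

end Derivatives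

theorem stmt_7_general
    {n k : ℕ}
    (K σ β d0 d1 : ℝ) (θ : ℕ)
    (hK : 0 < K)
    (x v : Fin k → ℝ → EuclideanSpace ℝ (Fin n))
    (f0 f1 : ℝ → ℝ)
    (hf0 : ∀ r, f0 r = ((r - d0) ^ θ)⁻¹)
    (hf1 : ∀ r, f1 r = ((r - d1) ^ θ)⁻¹)
    (a : Fin k → Fin k → ℝ → ℝ)
    (ha : ∀ i j t, a i j t = K / (σ ^ 2 + ‖x i t - x j t‖ ^ 2) ^ β)
    (Λ : ℝ → ℝ)
    (hΛ : ∀ t, Λ t = Real.sqrt ((1 / (k : ℝ)) *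
      ∑ i : Fin k, ∑ j ∈ Finset.univ.filter (fun j => j < i), ‖v i t - v j t‖ ^ 2))
    (hx : ∀ i, ∀ t : ℝ, 0 ≤ t → HasDerivAt (x i) (v i t) t)
    (hv : ∀ i, ∀ t : ℝ, 0 ≤ t → HasDerivAt (v i)
      ((∑ j : Fin k, a i j t • (v j t - v i t)) +
        Λ t • (∑ j ∈ Finset.univ.filter (fun j => j ≠ i),
          f0 (‖x i t - x j t‖ ^ 2) • (x i t - x j t)) +
        Λ t • (∑ j ∈ Finset.univ.filter (fun j => j ≠ i),
          f1 (‖x i t - x j t‖ ^ 2) • (x j t - x i t))) t)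
    (vbar : ℝ → EuclideanSpace ℝ (Fin n))
    (hvbar : ∀ t, vbar t = (k : ℝ)⁻¹ • ∑ i : Fin k, v i t)
    (V : ℝ → ℝ)
    (hV : ∀ t, V t = Real.sqrt (∑ i : Fin k, ‖v i t - vbar t‖ ^ 2))
    (δ : ℝ) (hδ : 0 < δ) (hδ' : δ < d1 - d0)
    (En : ℝ → ℝ)
    (hEn : ∀ t, En t = V t + (1 / 2) *
      ∑ i : Fin k, ∑ j ∈ Finset.univ.filter (fun j => j < i),
        ∫ r in (‖x i t - x j t‖ ^ 2)..(d1 - δ), (f0 r - f1 r))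
    :
    ∀ t : ℝ, 0 ≤ t →
      (∀ s ∈ Set.Icc (0 : ℝ) t, 0 < V s ∧
        ∀ i j : Fin k, i ≠ j →
          d0 < ‖x i s - x j s‖ ^ 2 ∧ ‖x i s - x j s‖ ^ 2 < d1) →
      En t ≤ En 0 := by
  intro t ht H
  have hc : d1 - δ ∈ Ioo d0 d1 := ⟨by linarith, by linarith⟩
  have hcont : ContinuousOn (fun r => f0 r - f1 r) (Ioo d0 d1) := by
    simp only [hf0, hf1]
    exact (ContinuousOn.inv₀ (by fun_prop) fun r hr => pow_ne_zero _ (sub_ne_zero.2 hr.1.ne')).sub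
      (ContinuousOn.inv₀ (by fun_prop) fun r hr => pow_ne_zero _ (sub_ne_zero.2 hr.2.ne))
  have hVeq : V = fun u => √(∑ i, ‖v i u - (k : ℝ)⁻¹ • ∑ j, v j u‖ ^ 2) := by
    funext u
    rw [hV, hvbar]
  have hΛV : ∀ s, Λ s = V s := fun s => by
    have hvar := inv_card_mul_sum_sum_lt_norm_sub_sq (fun i => v i s)
    rw [Fintype.card_fin] at hvar
    rw [hΛ, hVeq, one_div, hvar]
  have hsymm : ∀ s i j, a i j s = a j i s := fun s i j => by rw [ha, ha, norm_sub_rev]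
  refine le_of_hasDerivAt_nonpos ht (f' := fun s =>
    -(∑ i, ∑ j ∈ univ.filter (· < i), a i j s * ‖v i s - v j s‖ ^ 2) / V s)
    (fun s hs => ?_) (fun s hs => ?_)
  · obtain ⟨hVs, hxs⟩ := H s hs
    have hVd := HasDerivAt.sqrt_sum_norm_sub_average_sq (fun i => hv i s hs.1)
      (by simpa [hVeq] using hVs)
    have hVs_eq : √(∑ i, ‖v i s - (k : ℝ)⁻¹ • ∑ j, v j s‖ ^ 2) = V s := by rw [hVeq]
    simp only [Fintype.card_fin, hVs_eq] at hVd
    have hPd := hasDerivAt_sum_sum_lt_intervalIntegral hcont hc (fun i => hx i s hs.1) hxs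
    rw [← hVeq, sum_inner_flocking_accel _ _ _ _ (hsymm s), hΛV] at hVd
    rw [funext hEn]
    refine (hVd.add (hPd.const_mul (1 / 2))).congr_deriv ?_
    field_simp
    ring
  · have ha0 : ∀ i j, 0 ≤ a i j s := fun i j => by rw [ha]; positivity
    have hdiss : 0 ≤ ∑ i, ∑ j ∈ univ.filter (· < i), a i j s * ‖v i s - v j s‖ ^ 2 :=
      sum_nonneg fun i _ => sum_nonneg fun j _ => mul_nonneg (ha0 i j) (sq_nonneg _)
    exact div_nonpos_of_nonpos_of_nonneg (neg_nonpos.2 hdiss) ((hV s).symm ▸ Real.sqrt_nonneg _)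

theorem stmt_7
    {n k : ℕ} (hn : 1 ≤ n) (hk : 2 ≤ k)
    (K σ β d0 d1 : ℝ) (θ : ℕ)
    (hK : 0 < K) (hσ : 0 < σ) (hβ0 : 0 < β) (hβ : β ≤ 1 / 2)
    (hd0 : 0 < d0) (hd01 : d0 < d1) (hθ2 : 2 ≤ θ) (hθeven : Even θ)
    (x v : Fin k → ℝ → EuclideanSpace ℝ (Fin n))
    (f0 f1 : ℝ → ℝ)
    (hf0 : ∀ r, f0 r = ((r - d0) ^ θ)⁻¹)
    (hf1 : ∀ r, f1 r = ((r - d1) ^ θ)⁻¹)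
    (a : Fin k → Fin k → ℝ → ℝ)
    (ha : ∀ i j t, a i j t = K / (σ ^ 2 + ‖x i t - x j t‖ ^ 2) ^ β)
    (Λ : ℝ → ℝ)
    (hΛ : ∀ t, Λ t = Real.sqrt ((1 / (k : ℝ)) *
      ∑ i : Fin k, ∑ j ∈ Finset.univ.filter (fun j => j < i), ‖v i t - v j t‖ ^ 2))
    (hx : ∀ i, ∀ t : ℝ, 0 ≤ t → HasDerivAt (x i) (v i t) t)
    (hv : ∀ i, ∀ t : ℝ, 0 ≤ t → HasDerivAt (v i)
      ((∑ j : Fin k, a i j t • (v j t - v i t)) +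
        Λ t • (∑ j ∈ Finset.univ.filter (fun j => j ≠ i),
          f0 (‖x i t - x j t‖ ^ 2) • (x i t - x j t)) +
        Λ t • (∑ j ∈ Finset.univ.filter (fun j => j ≠ i),
          f1 (‖x i t - x j t‖ ^ 2) • (x j t - x i t))) t)
    (hinit : ∀ i j : Fin k, i ≠ j →
      d0 < ‖x i 0 - x j 0‖ ^ 2 ∧ ‖x i 0 - x j 0‖ ^ 2 < d1)
    (vbar : ℝ → EuclideanSpace ℝ (Fin n))
    (hvbar : ∀ t, vbar t = (k : ℝ)⁻¹ • ∑ i : Fin k, v i t)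
    (V : ℝ → ℝ)
    (hV : ∀ t, V t = Real.sqrt (∑ i : Fin k, ‖v i t - vbar t‖ ^ 2))
    (δ : ℝ) (hδ : 0 < δ) (hδ' : δ < d1 - d0)
    (En : ℝ → ℝ)
    (hEn : ∀ t, En t = V t + (1 / 2) *
      ∑ i : Fin k, ∑ j ∈ Finset.univ.filter (fun j => j < i),
        ∫ r in (‖x i t - x j t‖ ^ 2)..(d1 - δ), (f0 r - f1 r))
    :
    ∀ t : ℝ, 0 ≤ t →
      (∀ s ∈ Set.Icc (0 : ℝ) t, 0 < V s ∧
        ∀ i j : Fin k, i ≠ j →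
          d0 < ‖x i s - x j s‖ ^ 2 ∧ ‖x i s - x j s‖ ^ 2 < d1) →
      En t ≤ En 0 :=
  stmt_7_general K σ β d0 d1 θ hK x v f0 f1 hf0 hf1 a ha Λ hΛ hx hv vbar hvbar V hV δ hδ hδ' En hEn
end

section
/- Under the flocking dynamics with 0 < β ≤ 1/2, the velocity fluctuation is integrable: ∫₀^∞ V(t) dt < ∞. -/
/-!
The mean velocity is conserved, and with `y = ∑ᵢ ‖vᵢ - v̄‖²` one has `Λ = V = √y` and
`y' = -∑ᵢⱼ aᵢⱼ ‖vᵢ - vⱼ‖² + √y · P'`, where `P = ½ ∑_{i ≠ j} ψ(‖xᵢ - xⱼ‖²)` for a potential `ψ`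
with `ψ' = f0 - f1`. While all squared distances stay in a compact subinterval of `(d0, d1)`, the
weights satisfy `aᵢⱼ ≥ c₀ > 0`, so `(√y)' ≤ -c₀ k √y + P'/2`, that is
`√y(T) + c₀ k ∫₀ᵀ √y ≤ √y(0) + (P(T) - P(0)) / 2`.
Since `ψ ≤ 0` and `ψ → -∞` at `d0` and `d1`, this bounds every `ψ(‖xᵢ - xⱼ‖²)` from below by a
constant depending only on the initial data, and a continuity argument confines the squared
distances to a fixed compact subinterval for all time. The same inequality, with `P(T) ≤ 0`, then
bounds `∫₀ᵀ V` uniformly in `T`.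
-/

open scoped RealInnerProductSpace
open Set Filter Topology MeasureTheory

section VectorSpace

variable {ι M : Type*} [Fintype ι] [AddCommGroup M] [Module ℝ M]

theorem sum_sum_eq_zero_of_antisymm {f : ι → ι → M} (hf : ∀ i j, f i j = -f j i) :
    ∑ i, ∑ j, f i j = 0 := by
  have hneg : ∑ i, ∑ j, f i j = -∑ i, ∑ j, f i j := by
    conv_lhs => rw [Finset.sum_comm]
    rw [← Finset.sum_neg_distrib]
    refine Finset.sum_congr rfl fun i _ => ?_
    rw [← Finset.sum_neg_distrib]
    exact Finset.sum_congr rfl fun j _ => hf j i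
  have htwo : (2 : ℝ) • ∑ i, ∑ j, f i j = 0 := by
    rw [two_smul]
    nth_rw 1 [hneg]
    exact neg_add_cancel _
  exact (smul_eq_zero.1 htwo).resolve_left two_ne_zero

theorem sum_sub_eq_zero_of_sum_eq {w : ι → M} {c : M}
    (hw : ∑ i, w i = (Fintype.card ι : ℝ) • c) : ∑ i, (w i - c) = 0 := by
  rw [Finset.sum_sub_distrib, hw, Finset.sum_const, Finset.card_univ, Nat.cast_smul_eq_nsmul,
    sub_self]

theorem sum_filter_ne_smul_sub_add_sum_filter_ne_smul_sub [DecidableEq ι] (c₀ c₁ : ι → ℝ)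
    (y : ι → M) (i : ι) :
    ∑ j ∈ Finset.univ.filter (fun j => j ≠ i), c₀ j • (y i - y j) +
        ∑ j ∈ Finset.univ.filter (fun j => j ≠ i), c₁ j • (y j - y i) =
      ∑ j, (c₀ j - c₁ j) • (y i - y j) := by
  rw [← Finset.sum_add_distrib, Finset.filter_ne', Finset.sum_erase _ (by simp)]
  refine Finset.sum_congr rfl fun j _ => ?_
  rw [sub_smul, ← neg_sub (y i) (y j), smul_neg, ← sub_eq_add_neg]

def flockingForce (a G : ι → ι → ℝ) (l : ℝ) (x v : ι → M) (i : ι) : M :=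
  ∑ j, a i j • (v j - v i) + l • ∑ j, G i j • (x i - x j)

theorem sum_flockingForce {a G : ι → ι → ℝ} {l : ℝ} {x v : ι → M} (ha : ∀ i j, a i j = a j i)
    (hG : ∀ i j, G i j = G j i) : ∑ i, flockingForce a G l x v i = 0 := by
  have halign : ∑ i, ∑ j, a i j • (v j - v i) = 0 :=
    sum_sum_eq_zero_of_antisymm fun i j => by rw [ha, ← smul_neg, neg_sub]
  have hpair : ∑ i, ∑ j, G i j • (x i - x j) = 0 :=
    sum_sum_eq_zero_of_antisymm fun i j => by rw [hG, ← smul_neg, neg_sub]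
  simp only [flockingForce, Finset.sum_add_distrib, ← Finset.smul_sum, halign, hpair,
    smul_zero, add_zero]

end VectorSpace

theorem sum_sum_eq_two_mul_sum_sum_lt {ι : Type*} [Fintype ι] [LinearOrder ι] {f : ι → ι → ℝ}
    (hf : ∀ i j, f i j = f j i) (hdiag : ∀ i, f i i = 0) :
    ∑ i, ∑ j, f i j = 2 * ∑ i, ∑ j ∈ Finset.univ.filter (· < i), f i j := by
  have hrow : ∀ i, ∑ j, f i j =
      ∑ j ∈ Finset.univ.filter (· < i), f i j + ∑ j ∈ Finset.univ.filter (i < ·), f i j := by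
    intro i
    rw [← Finset.sum_filter_add_sum_filter_not Finset.univ (· < i)]
    congr 1
    refine (Finset.sum_subset (fun j => by simp +contextual [le_of_lt]) fun j hj hj' => ?_).symm
    simp only [Finset.mem_filter, Finset.mem_univ, true_and, not_lt] at hj hj'
    rw [le_antisymm hj' hj, hdiag]
  rw [Finset.sum_congr rfl fun i _ => hrow i, Finset.sum_add_distrib, two_mul]
  congr 1
  rw [Finset.sum_comm' (t' := Finset.univ) (s' := fun j => Finset.univ.filter (· < j)) (by simp)]
  exact Finset.sum_congr rfl fun i _ => Finset.sum_congr rfl fun j _ => hf j i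

section InnerProductSpace

variable {ι E : Type*} [Fintype ι] [NormedAddCommGroup E] [InnerProductSpace ℝ E]

theorem two_mul_sum_sum_inner_of_antisymm {h : ι → ι → E} (hh : ∀ i j, h i j = -h j i)
    (u : ι → E) : 2 * ∑ i, ∑ j, ⟪h i j, u i⟫ = ∑ i, ∑ j, ⟪h i j, u i - u j⟫ := by
  have hswap : ∑ i, ∑ j, ⟪h i j, u j⟫ = -∑ i, ∑ j, ⟪h i j, u i⟫ := by
    rw [Finset.sum_comm, ← Finset.sum_neg_distrib]
    refine Finset.sum_congr rfl fun i _ => ?_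
    rw [← Finset.sum_neg_distrib]
    exact Finset.sum_congr rfl fun j _ => by rw [hh, inner_neg_left]
  simp only [inner_sub_right, Finset.sum_sub_distrib, hswap]
  ring

theorem sum_sum_norm_sub_sq_of_sum_eq_zero {u : ι → E} (hu : ∑ i, u i = 0) :
    ∑ i, ∑ j, ‖u i - u j‖ ^ 2 = 2 * Fintype.card ι * ∑ i, ‖u i‖ ^ 2 := by
  have hinner : ∑ i, ∑ j, ⟪u i, u j⟫ = 0 := by
    simp only [← inner_sum, ← sum_inner, hu, inner_zero_left]
  simp only [norm_sub_sq_real, Finset.sum_add_distrib, Finset.sum_sub_distrib,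
    ← Finset.mul_sum, hinner, Finset.sum_const, Finset.card_univ, nsmul_eq_mul]
  ring

theorem mul_sum_norm_sub_sq_le_sum_sum {a : ι → ι → ℝ} {w : ι → E} {c : E} {c₀ : ℝ}
    (ha : ∀ i j, i ≠ j → c₀ ≤ a i j) (hw : ∑ i, w i = (Fintype.card ι : ℝ) • c) :
    2 * (c₀ * Fintype.card ι) * ∑ i, ‖w i - c‖ ^ 2 ≤ ∑ i, ∑ j, a i j * ‖w i - w j‖ ^ 2 := by
  have hpairs := sum_sum_norm_sub_sq_of_sum_eq_zero (sum_sub_eq_zero_of_sum_eq hw)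
  simp only [sub_sub_sub_cancel_right] at hpairs
  rw [show 2 * (c₀ * Fintype.card ι) * ∑ i, ‖w i - c‖ ^ 2 =
    c₀ * (2 * Fintype.card ι * ∑ i, ‖w i - c‖ ^ 2) by ring, ← hpairs, Finset.mul_sum]
  refine Finset.sum_le_sum fun i _ => ?_
  rw [Finset.mul_sum]
  refine Finset.sum_le_sum fun j _ => ?_
  rcases eq_or_ne i j with rfl | hij
  · simp
  · exact mul_le_mul_of_nonneg_right (ha i j hij) (sq_nonneg _)

theorem abs_sum_sum_mul_inner_le {G : ι → ι → ℝ} {x w : ι → E} {g R : ℝ} (c : E) (hg : 0 ≤ g)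
    (hG : ∀ i j, i ≠ j → |G i j| ≤ g) (hx : ∀ i j, ‖x i - x j‖ ≤ R) :
    |∑ i, ∑ j, G i j * ⟪x i - x j, w i - w j⟫| ≤
      Fintype.card ι ^ 2 * (2 * g * R) * √(∑ i, ‖w i - c‖ ^ 2) := by
  set Y := √(∑ i, ‖w i - c‖ ^ 2)
  have hwY : ∀ i, ‖w i - c‖ ≤ Y := fun i =>
    Real.le_sqrt_of_sq_le (Finset.single_le_sum (f := fun i => ‖w i - c‖ ^ 2)
      (fun _ _ => sq_nonneg _) (Finset.mem_univ i))
  have hterm : ∀ i j, |G i j * ⟪x i - x j, w i - w j⟫| ≤ 2 * g * R * Y := by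
    intro i j
    have hR : 0 ≤ R := (norm_nonneg _).trans (hx i i)
    rcases eq_or_ne i j with rfl | hij
    · simp only [sub_self, inner_zero_left, mul_zero, abs_zero]
      exact mul_nonneg (by positivity) (Real.sqrt_nonneg _)
    have hwij : ‖w i - w j‖ ≤ 2 * Y := by
      rw [← sub_sub_sub_cancel_right (w i) (w j) c]
      linarith [norm_sub_le (w i - c) (w j - c), hwY i, hwY j]
    calc |G i j * ⟪x i - x j, w i - w j⟫|
        = |G i j| * |⟪x i - x j, w i - w j⟫| := abs_mul _ _
      _ ≤ g * (R * (2 * Y)) := mul_le_mul (hG i j hij)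
          ((abs_real_inner_le_norm _ _).trans (mul_le_mul (hx i j) hwij (norm_nonneg _) hR))
          (abs_nonneg _) hg
      _ = 2 * g * R * Y := by ring
  calc |∑ i, ∑ j, G i j * ⟪x i - x j, w i - w j⟫|
      ≤ ∑ i, ∑ j, |G i j * ⟪x i - x j, w i - w j⟫| :=
        (Finset.abs_sum_le_sum_abs _ _).trans
          (Finset.sum_le_sum fun i _ => Finset.abs_sum_le_sum_abs _ _)
    _ ≤ ∑ _i : ι, ∑ _j : ι, 2 * g * R * Y :=
        Finset.sum_le_sum fun i _ => Finset.sum_le_sum fun j _ => hterm i j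
    _ = Fintype.card ι ^ 2 * (2 * g * R) * Y := by
        simp only [Finset.sum_const, Finset.card_univ, nsmul_eq_mul]
        ring

theorem sum_two_mul_inner_flockingForce {a G : ι → ι → ℝ} {l : ℝ} {x v : ι → E}
    (ha : ∀ i j, a i j = a j i) (hG : ∀ i j, G i j = G j i) (c : E) :
    ∑ i, 2 * ⟪flockingForce a G l x v i, v i - c⟫ =
      -∑ i, ∑ j, a i j * ‖v i - v j‖ ^ 2 + l * ∑ i, ∑ j, G i j * ⟪x i - x j, v i - v j⟫ := by
  have halign := two_mul_sum_sum_inner_of_antisymm (h := fun i j => a i j • (v j - v i))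
    (fun i j => by rw [ha, ← smul_neg, neg_sub]) (fun i => v i - c)
  have hpair := two_mul_sum_sum_inner_of_antisymm (h := fun i j => G i j • (x i - x j))
    (fun i j => by rw [hG, ← smul_neg, neg_sub]) (fun i => v i - c)
  simp only [sub_sub_sub_cancel_right, inner_smul_left, RCLike.conj_to_real] at halign hpair
  simp only [flockingForce, inner_add_left, inner_smul_left, sum_inner, RCLike.conj_to_real,
    mul_add, Finset.sum_add_distrib, ← Finset.mul_sum]
  rw [halign, ← mul_assoc, mul_comm 2 l, mul_assoc, hpair]
  congr 1
  rw [← Finset.sum_neg_distrib]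
  refine Finset.sum_congr rfl fun i _ => ?_
  rw [← Finset.sum_neg_distrib]
  refine Finset.sum_congr rfl fun j _ => ?_
  rw [← neg_sub (v i), inner_neg_left, real_inner_self_eq_norm_sq]
  ring

end InnerProductSpace

theorem regularized_energy_deriv_le {y S Q c C ε : ℝ} (hc : 0 ≤ c) (hC : 0 ≤ C) (hε : 0 < ε)
    (hy : 0 ≤ y) (hS : 2 * c * y ≤ S) (hQ : |Q| ≤ C * √y) :
    (-S + √y * Q) / (2 * √(y + ε ^ 2)) - Q / 2 ≤ -c * √y + (c + C / 2) * ε := by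
  set s := √y
  set z := √(y + ε ^ 2)
  have hs : 0 ≤ s := Real.sqrt_nonneg y
  have hs2 : s ^ 2 = y := Real.sq_sqrt hy
  have hz2 : z ^ 2 = s ^ 2 + ε ^ 2 := by rw [Real.sq_sqrt (by positivity), hs2]
  have hsz : s ≤ z := Real.sqrt_le_sqrt (by linarith [sq_nonneg ε])
  have hεz : ε ≤ z := by
    rw [← Real.sqrt_sq hε.le]
    exact Real.sqrt_le_sqrt (by linarith)
  have hz : 0 < z := hε.trans_le hεz
  rw [div_sub' (by positivity), div_le_iff₀ (by positivity)]
  have hQ' := abs_le.1 hQ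
  have hgap : (z - s) * s ≤ ε ^ 2 := by nlinarith
  nlinarith [mul_le_mul_of_nonneg_left hQ'.1 (sub_nonneg.2 hsz),
    mul_le_mul_of_nonneg_right hgap hC, mul_nonneg hc (mul_nonneg hε.le (sub_nonneg.2 hεz)),
    mul_nonneg hC (mul_nonneg hε.le (sub_nonneg.2 hεz)), mul_nonneg hc (sub_nonneg.2 hsz)]

theorem sqrt_add_mul_integral_le {y P S Q : ℝ → ℝ} {a b c C : ℝ} (hab : a ≤ b) (hc : 0 ≤ c)
    (hC : 0 ≤ C) (hy_cont : ContinuousOn y (Icc a b)) (hP_cont : ContinuousOn P (Icc a b))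
    (hy_nonneg : ∀ t ∈ Icc a b, 0 ≤ y t)
    (hy : ∀ t ∈ Ioo a b, HasDerivAt y (-S t + √(y t) * Q t) t)
    (hP : ∀ t ∈ Ioo a b, HasDerivAt P (Q t) t)
    (hS : ∀ t ∈ Ioo a b, 2 * c * y t ≤ S t) (hQ : ∀ t ∈ Ioo a b, |Q t| ≤ C * √(y t)) :
    √(y b) + c * ∫ t in a..b, √(y t) ≤ √(y a) + (P b - P a) / 2 := by
  set M := 1 + (c + C / 2) * (b - a)
  have hM : 0 < M := by have := sub_nonneg.2 hab; positivity
  suffices h : ∀ ε > 0,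
      √(y b) + c * ∫ t in a..b, √(y t) ≤ √(y a) + (P b - P a) / 2 + ε * M by
    refine le_of_forall_pos_le_add fun δ hδ => ?_
    simpa [div_mul_cancel₀ _ hM.ne'] using h (δ / M) (div_pos hδ hM)
  intro ε hε
  have hsqrt_cont : ContinuousOn (fun t => √(y t)) (Icc a b) := hy_cont.sqrt
  -- `√(y + ε²)` is differentiable even where `y` vanishes
  have hderiv : ∀ t ∈ Ioo a b, HasDerivAt (fun t => √(y t + ε ^ 2) - P t / 2)
      ((-S t + √(y t) * Q t) / (2 * √(y t + ε ^ 2)) - Q t / 2) t := fun t ht =>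
    (((hy t ht).add_const _).sqrt (by positivity [hy_nonneg t (Ioo_subset_Icc_self ht)])).sub
      ((hP t ht).div_const 2)
  have hFTC := intervalIntegral.sub_le_integral_of_hasDeriv_right_of_le
    (g := fun t => √(y t + ε ^ 2) - P t / 2) (φ := fun t => -c * √(y t) + (c + C / 2) * ε) hab
    (((hy_cont.add continuousOn_const).sqrt).sub (hP_cont.div_const 2))
    (fun t ht => (hderiv t ht).hasDerivWithinAt)
    ((continuousOn_const.mul hsqrt_cont).add continuousOn_const).integrableOn_Icc
    (fun t ht => regularized_energy_deriv_le hc hC hε (hy_nonneg t (Ioo_subset_Icc_self ht))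
      (hS t ht) (hQ t ht))
  have hint : IntervalIntegrable (fun t => -c * √(y t)) volume a b :=
    (continuousOn_const.mul hsqrt_cont).intervalIntegrable_of_Icc hab
  rw [intervalIntegral.integral_add hint intervalIntegrable_const,
    intervalIntegral.integral_const_mul, intervalIntegral.integral_const, smul_eq_mul] at hFTC
  have hb : √(y b) ≤ √(y b + ε ^ 2) := Real.sqrt_le_sqrt (by linarith [sq_nonneg ε])
  have ha : √(y a + ε ^ 2) ≤ √(y a) + ε := by
    rw [Real.sqrt_le_left (by positivity)]
    nlinarith [Real.sq_sqrt (hy_nonneg a (left_mem_Icc.2 hab)), Real.sqrt_nonneg (y a)]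
  have hεM : ε * M = ε + (b - a) * ((c + C / 2) * ε) := by ring
  linarith

theorem forall_mem_of_forall_Icc_mem {α : Type*} [TopologicalSpace α] {γ : ℝ → α} {U F : Set α}
    (hγ : ContinuousOn γ (Ici 0)) (hU : IsOpen U) (hF : IsClosed F) (hUF : U ⊆ F)
    (h0 : γ 0 ∈ U) (hstep : ∀ T, 0 ≤ T → (∀ t ∈ Icc 0 T, γ t ∈ F) → γ T ∈ U) :
    ∀ t, 0 ≤ t → γ t ∈ U := by
  by_contra! hbad
  set S := Ici 0 ∩ γ ⁻¹' Uᶜ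
  have hS_closed : IsClosed S := hγ.preimage_isClosed_of_isClosed isClosed_Ici hU.isClosed_compl
  have hS_bdd : BddBelow S := ⟨0, fun t ht => ht.1⟩
  obtain ⟨t₀, ht₀, ht₀U⟩ := hbad
  have hT : sInf S ∈ S := hS_closed.csInf_mem ⟨t₀, ht₀, ht₀U⟩ hS_bdd
  have hbefore : ∀ t ∈ Ico 0 (sInf S), γ t ∈ U := fun t ht => by
    by_contra htU
    exact (csInf_le hS_bdd ⟨ht.1, htU⟩).not_gt ht.2
  have hpos : 0 < sInf S := lt_of_le_of_ne hT.1 fun h => hT.2 (h ▸ h0)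
  have hlim : γ (sInf S) ∈ F := by
    have hcl : sInf S ∈ closure (Ico 0 (sInf S)) := by
      rw [closure_Ico hpos.ne]
      exact right_mem_Icc.2 hT.1
    refine hF.closure_subset_iff.2 ?_
      (((hγ (sInf S) hT.1).mono Ico_subset_Ici_self).mem_closure_image hcl)
    rintro _ ⟨t, ht, rfl⟩
    exact hUF (hbefore t ht)
  refine hT.2 (hstep _ hT.1 fun t ht => ?_)
  rcases ht.2.lt_or_eq with hlt | rfl
  · exact hUF (hbefore t ⟨ht.1, hlt⟩)
  · exact hlim

theorem exists_Ioo_of_le_of_tendsto_atBot {ψ : ℝ → ℝ} {d₀ d₁ : ℝ}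
    (h₀ : Tendsto ψ (𝓝[>] d₀) atBot) (h₁ : Tendsto ψ (𝓝[<] d₁) atBot) (B : ℝ) :
    ∃ r₀ r₁, d₀ < r₀ ∧ r₁ < d₁ ∧ ∀ r ∈ Ioo d₀ d₁, B ≤ ψ r → r ∈ Ioo r₀ r₁ := by
  obtain ⟨u₀, hu₀, hψu₀⟩ := mem_nhdsGT_iff_exists_Ioo_subset.1 (h₀.eventually_lt_atBot B)
  obtain ⟨u₁, hu₁, hψu₁⟩ := mem_nhdsLT_iff_exists_Ioo_subset.1 (h₁.eventually_lt_atBot B)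
  refine ⟨(d₀ + u₀) / 2, (u₁ + d₁) / 2, by linarith [hu₀.out], by linarith [hu₁.out],
    fun r hr hB => ⟨?_, ?_⟩⟩
  · by_contra! h
    exact (hψu₀ ⟨hr.1, by linarith [hu₀.out]⟩ : ψ r < B).not_ge hB
  · by_contra! h
    exact (hψu₁ ⟨by linarith [hu₁.out], hr.2⟩ : ψ r < B).not_ge hB

theorem integrableOn_Ici_of_intervalIntegral_le {f : ℝ → ℝ} {a M : ℝ}
    (hf : ContinuousOn f (Ici a)) (hf_nonneg : ∀ t, a ≤ t → 0 ≤ f t)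
    (hM : ∀ T, a ≤ T → ∫ t in a..T, f t ≤ M) : IntegrableOn f (Ici a) := by
  rw [integrableOn_Ici_iff_integrableOn_Ioi]
  refine integrableOn_Ioi_of_intervalIntegral_norm_bounded M a (b := fun n : ℕ => a + n)
    (fun n => (hf.mono Icc_subset_Ici_self).integrableOn_Icc.mono_set Ioc_subset_Icc_self)
    (tendsto_atTop_add_const_left _ _ tendsto_natCast_atTop_atTop)
    (Eventually.of_forall fun n => ?_)
  have ha : a ≤ a + n := le_add_of_nonneg_right n.cast_nonneg
  rw [intervalIntegral.integral_congr fun t ht =>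
    Real.norm_of_nonneg (hf_nonneg t (uIcc_of_le ha ▸ ht).1)]
  exact hM _ ha

noncomputable def pairPotential (m : ℕ) (d₀ d₁ r : ℝ) : ℝ :=
  (((r - d₁) ^ m)⁻¹ - ((r - d₀) ^ m)⁻¹) / m

section PairPotential

variable {m : ℕ} {d d₀ d₁ r : ℝ}

theorem hasDerivAt_inv_pow_sub (hr : r ≠ d) :
    HasDerivAt (fun s => ((s - d) ^ m)⁻¹) (-(m * ((r - d) ^ (m + 1))⁻¹)) r := by
  have hpow : HasDerivAt (fun s => (s - d) ^ m) (m * (r - d) ^ (m - 1) * 1) r :=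
    ((hasDerivAt_id r).sub_const d).pow m
  refine (hpow.inv (pow_ne_zero m (sub_ne_zero.2 hr))).congr_deriv ?_
  rcases m with _ | m
  · simp
  · have hrd : r - d ≠ 0 := sub_ne_zero.2 hr
    simp only [Nat.add_sub_cancel]
    field_simp
    ring

theorem hasDerivAt_pairPotential (hm : m ≠ 0) (h₀ : r ≠ d₀) (h₁ : r ≠ d₁) :
    HasDerivAt (pairPotential m d₀ d₁) (((r - d₀) ^ (m + 1))⁻¹ - ((r - d₁) ^ (m + 1))⁻¹) r := by
  have hm' : (m : ℝ) ≠ 0 := Nat.cast_ne_zero.2 hm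
  refine (((hasDerivAt_inv_pow_sub h₁).sub (hasDerivAt_inv_pow_sub h₀)).div_const
    (m : ℝ)).congr_deriv ?_
  field_simp
  ring

theorem pairPotential_le_left (hm : Odd m) (hr : r ∈ Ioo d₀ d₁) :
    pairPotential m d₀ d₁ r ≤ -(((r - d₀) ^ m)⁻¹ / m) := by
  have h₁ : ((r - d₁) ^ m)⁻¹ < 0 := inv_lt_zero.2 (hm.pow_neg (sub_neg.2 hr.2))
  rw [pairPotential, ← neg_div]
  exact div_le_div_of_nonneg_right (by linarith) m.cast_nonneg

theorem pairPotential_le_right (hm : Odd m) (hr : r ∈ Ioo d₀ d₁) :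
    pairPotential m d₀ d₁ r ≤ -(((d₁ - r) ^ m)⁻¹ / m) := by
  have h₀ : 0 < ((r - d₀) ^ m)⁻¹ := inv_pos.2 (pow_pos (sub_pos.2 hr.1) m)
  rw [pairPotential, ← neg_div, ← neg_sub d₁ r, hm.neg_pow, inv_neg]
  exact div_le_div_of_nonneg_right (by linarith) m.cast_nonneg

theorem pairPotential_nonpos (hm : Odd m) (hr : r ∈ Ioo d₀ d₁) : pairPotential m d₀ d₁ r ≤ 0 :=
  (pairPotential_le_left hm hr).trans
    (neg_nonpos.2 (div_nonneg (inv_nonneg.2 (pow_nonneg (sub_pos.2 hr.1).le m)) m.cast_nonneg))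

theorem continuousOn_inv_pow_sub_sub_inv_pow_sub :
    ContinuousOn (fun r => ((r - d₀) ^ m)⁻¹ - ((r - d₁) ^ m)⁻¹) (Ioo d₀ d₁) :=
  (((continuousOn_id.sub continuousOn_const).pow m).inv₀ fun _ hr =>
    pow_ne_zero m (sub_ne_zero.2 hr.1.ne')).sub
    (((continuousOn_id.sub continuousOn_const).pow m).inv₀ fun _ hr =>
      pow_ne_zero m (sub_ne_zero.2 hr.2.ne))

theorem tendsto_neg_inv_pow_div_nhdsGT_zero (hm : m ≠ 0) :
    Tendsto (fun s : ℝ => -((s ^ m)⁻¹ / m)) (𝓝[>] 0) atBot := by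
  have hpow : Tendsto (fun s : ℝ => (s ^ m)⁻¹) (𝓝[>] 0) atTop := by
    simpa only [Function.comp_def, inv_pow] using
      (tendsto_pow_atTop (α := ℝ) hm).comp tendsto_inv_nhdsGT_zero
  exact tendsto_neg_atTop_atBot.comp
    (hpow.atTop_div_const (Nat.cast_pos.2 (Nat.pos_of_ne_zero hm)))

theorem tendsto_pairPotential_nhdsGT (hm : Odd m) (hd : d₀ < d₁) :
    Tendsto (pairPotential m d₀ d₁) (𝓝[>] d₀) atBot := by
  have hshift : Tendsto (fun r => r - d₀) (𝓝[>] d₀) (𝓝[>] 0) := by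
    refine tendsto_nhdsWithin_iff.2
      ⟨?_, eventually_nhdsWithin_of_forall fun r hr => mem_Ioi.2 (sub_pos.2 hr)⟩
    simpa using ((continuous_sub_right d₀).tendsto d₀).mono_left nhdsWithin_le_nhds
  refine tendsto_atBot_mono' _ ?_ ((tendsto_neg_inv_pow_div_nhdsGT_zero hm.pos.ne').comp hshift)
  filter_upwards [Ioo_mem_nhdsGT hd] with r hr using pairPotential_le_left hm hr

theorem tendsto_pairPotential_nhdsLT (hm : Odd m) (hd : d₀ < d₁) :
    Tendsto (pairPotential m d₀ d₁) (𝓝[<] d₁) atBot := by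
  have hshift : Tendsto (fun r => d₁ - r) (𝓝[<] d₁) (𝓝[>] 0) := by
    refine tendsto_nhdsWithin_iff.2
      ⟨?_, eventually_nhdsWithin_of_forall fun r hr => mem_Ioi.2 (sub_pos.2 hr)⟩
    simpa using ((continuous_sub_left d₁).tendsto d₁).mono_left nhdsWithin_le_nhds
  refine tendsto_atBot_mono' _ ?_ ((tendsto_neg_inv_pow_div_nhdsGT_zero hm.pos.ne').comp hshift)
  filter_upwards [Ioo_mem_nhdsLT hd] with r hr using pairPotential_le_right hm hr

end PairPotential

section Energies

variable {ι E : Type*} [Fintype ι] [NormedAddCommGroup E]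

noncomputable def velocityFluctuation [Module ℝ E] (v : ι → E) : ℝ :=
  √(∑ i, ‖v i - (Fintype.card ι : ℝ)⁻¹ • ∑ j, v j‖ ^ 2)

theorem velocityFluctuation_nonneg [Module ℝ E] {w : ι → E} : 0 ≤ velocityFluctuation w :=
  Real.sqrt_nonneg _

theorem velocityFluctuation_eq_of_sum_eq [Module ℝ E] [Nonempty ι] {w : ι → E} {c : E}
    (hw : ∑ i, w i = (Fintype.card ι : ℝ) • c) :
    velocityFluctuation w = √(∑ i, ‖w i - c‖ ^ 2) := by
  rw [velocityFluctuation, hw, smul_smul, inv_mul_cancel₀ (by positivity), one_smul]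

theorem continuous_velocityFluctuation [NormedSpace ℝ E] :
    Continuous (velocityFluctuation : (ι → E) → ℝ) := by
  unfold velocityFluctuation
  fun_prop

variable [DecidableEq ι]

noncomputable def interactionEnergy (ψ : ℝ → ℝ) (x : ι → E) : ℝ :=
  (∑ i, ∑ j ∈ Finset.univ.erase i, ψ (‖x i - x j‖ ^ 2)) / 2

theorem interactionEnergy_nonpos {ψ : ℝ → ℝ} {x : ι → E}
    (hψ : ∀ i j, i ≠ j → ψ (‖x i - x j‖ ^ 2) ≤ 0) : interactionEnergy ψ x ≤ 0 :=
  div_nonpos_of_nonpos_of_nonneg (Finset.sum_nonpos fun i _ => Finset.sum_nonpos fun j hj =>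
    hψ i j (Finset.ne_of_mem_erase hj).symm) zero_le_two

theorem two_mul_interactionEnergy_le {ψ : ℝ → ℝ} {x : ι → E}
    (hψ : ∀ i j, i ≠ j → ψ (‖x i - x j‖ ^ 2) ≤ 0) {i j : ι} (hij : i ≠ j) :
    2 * interactionEnergy ψ x ≤ ψ (‖x i - x j‖ ^ 2) := by
  have hrow : ∀ k, ∑ l ∈ Finset.univ.erase k, ψ (‖x k - x l‖ ^ 2) ≤ 0 := fun k =>
    Finset.sum_nonpos fun l hl => hψ k l (Finset.ne_of_mem_erase hl).symm
  rw [interactionEnergy, mul_div_cancel₀ _ two_ne_zero,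
    ← Finset.add_sum_erase _ _ (Finset.mem_univ i),
    ← Finset.add_sum_erase _ _ (Finset.mem_erase.2 ⟨hij.symm, Finset.mem_univ j⟩)]
  linarith [Finset.sum_nonpos fun k (_ : k ∈ Finset.univ.erase i) => hrow k,
    Finset.sum_nonpos fun l (hl : l ∈ (Finset.univ.erase i).erase j) =>
      hψ i l (Finset.ne_of_mem_erase (Finset.mem_of_mem_erase hl)).symm]

end Energies

def IsFlockingSolution {ι E : Type*} [Fintype ι] [NormedAddCommGroup E] [NormedSpace ℝ E]
    (φ ψ' : ℝ → ℝ) (x v : ι → ℝ → E) : Prop :=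
  ∀ t, 0 ≤ t → ∀ i, HasDerivAt (x i) (v i t) t ∧
    HasDerivAt (v i) (flockingForce (fun i j => φ (‖x i t - x j t‖ ^ 2))
      (fun i j => ψ' (‖x i t - x j t‖ ^ 2)) (velocityFluctuation fun j => v j t)
      (fun j => x j t) (fun j => v j t) i) t

section Derivatives

variable {ι E : Type*} [Fintype ι] [NormedAddCommGroup E] [InnerProductSpace ℝ E]

theorem velocityFluctuation_eq_sqrt_sum_sum_lt [LinearOrder ι] [Nonempty ι] (w : ι → E) :
    velocityFluctuation w = √(1 / (Fintype.card ι : ℝ) *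
      ∑ i, ∑ j ∈ Finset.univ.filter (fun j => j < i), ‖w i - w j‖ ^ 2) := by
  set c := (Fintype.card ι : ℝ)⁻¹ • ∑ j, w j
  have hw : ∑ i, w i = (Fintype.card ι : ℝ) • c := by
    rw [smul_smul, mul_inv_cancel₀ (by positivity), one_smul]
  have hpairs := sum_sum_norm_sub_sq_of_sum_eq_zero (sum_sub_eq_zero_of_sum_eq hw)
  simp only [sub_sub_sub_cancel_right] at hpairs
  rw [sum_sum_eq_two_mul_sum_sum_lt (fun i j => by rw [norm_sub_rev]) (by simp), mul_assoc 2]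
    at hpairs
  rw [velocityFluctuation_eq_of_sum_eq hw, mul_left_cancel₀ two_ne_zero hpairs, ← mul_assoc,
    one_div, inv_mul_cancel₀ (by positivity), one_mul]

theorem hasDerivAt_sum_norm_sub_sq {v : ι → ℝ → E} {v' : ι → E} {t : ℝ}
    (hv : ∀ i, HasDerivAt (v i) (v' i) t) (c : E) :
    HasDerivAt (fun s => ∑ i, ‖v i s - c‖ ^ 2) (∑ i, 2 * ⟪v' i, v i t - c⟫) t := by
  refine HasDerivAt.fun_sum fun i _ => ((hv i).sub_const c).norm_sq.congr_deriv ?_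
  rw [real_inner_comm]

theorem hasDerivAt_interactionEnergy [DecidableEq ι] {x : ι → ℝ → E} {x' : ι → E} {t : ℝ}
    (hx : ∀ i, HasDerivAt (x i) (x' i) t) {ψ ψ' : ℝ → ℝ}
    (hψ : ∀ i j, i ≠ j → HasDerivAt ψ (ψ' (‖x i t - x j t‖ ^ 2)) (‖x i t - x j t‖ ^ 2)) :
    HasDerivAt (fun s => interactionEnergy ψ fun i => x i s)
      (∑ i, ∑ j, ψ' (‖x i t - x j t‖ ^ 2) * ⟪x i t - x j t, x' i - x' j⟫) t := by
  have hterm : ∀ i, ∀ j ∈ Finset.univ.erase i, HasDerivAt (fun s => ψ (‖x i s - x j s‖ ^ 2))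
      (2 * (ψ' (‖x i t - x j t‖ ^ 2) * ⟪x i t - x j t, x' i - x' j⟫)) t := fun i j hj =>
    ((hψ i j (Finset.ne_of_mem_erase hj).symm).comp t ((hx i).sub (hx j)).norm_sq).congr_deriv
      (by rw [Pi.sub_apply]; ring)
  refine ((HasDerivAt.fun_sum fun i _ => HasDerivAt.fun_sum (hterm i)).div_const 2).congr_deriv ?_
  simp only [← Finset.mul_sum]
  rw [mul_div_cancel_left₀ _ two_ne_zero]
  refine Finset.sum_congr rfl fun i _ => Finset.sum_erase _ ?_
  simp

end Derivatives

namespace IsFlockingSolution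

variable {ι E : Type*} [Fintype ι] [NormedAddCommGroup E] [InnerProductSpace ℝ E]
  {φ ψ' : ℝ → ℝ} {x v : ι → ℝ → E}

theorem sum_velocity_eq (h : IsFlockingSolution φ ψ' x v) {t : ℝ} (ht : 0 ≤ t) :
    ∑ i, v i t = ∑ i, v i 0 := by
  have hderiv : ∀ s, 0 ≤ s → HasDerivAt (fun s => ∑ i, v i s) 0 s := fun s hs =>
    (HasDerivAt.fun_sum fun i _ => (h s hs i).2).congr_deriv
      (sum_flockingForce (fun i j => by rw [norm_sub_rev]) (fun i j => by rw [norm_sub_rev]))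
  exact constant_of_has_deriv_right_zero
    (fun s hs => (hderiv s hs.1).continuousAt.continuousWithinAt)
    (fun s hs => (hderiv s hs.1).hasDerivWithinAt) t ⟨ht, le_rfl⟩

theorem hasDerivAt_sum_norm_sub_sq [Nonempty ι] (h : IsFlockingSolution φ ψ' x v) {c : E}
    (hc : ∑ i, v i 0 = (Fintype.card ι : ℝ) • c) {t : ℝ} (ht : 0 ≤ t) :
    HasDerivAt (fun s => ∑ i, ‖v i s - c‖ ^ 2)
      (-∑ i, ∑ j, φ (‖x i t - x j t‖ ^ 2) * ‖v i t - v j t‖ ^ 2 +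
        √(∑ i, ‖v i t - c‖ ^ 2) *
          ∑ i, ∑ j, ψ' (‖x i t - x j t‖ ^ 2) * ⟪x i t - x j t, v i t - v j t⟫) t := by
  refine (_root_.hasDerivAt_sum_norm_sub_sq (fun i => (h t ht i).2) c).congr_deriv ?_
  rw [sum_two_mul_inner_flockingForce (fun i j => by rw [norm_sub_rev])
    (fun i j => by rw [norm_sub_rev]), velocityFluctuation_eq_of_sum_eq (c := c)]
  rw [h.sum_velocity_eq ht, hc]

theorem energy_le [Nonempty ι] [DecidableEq ι] (h : IsFlockingSolution φ ψ' x v) {ψ : ℝ → ℝ}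
    {T c₀ g R : ℝ} (hT : 0 ≤ T) (hc₀ : 0 ≤ c₀) (hg : 0 ≤ g)
    (hφ : ∀ t ∈ Icc 0 T, ∀ i j, i ≠ j → c₀ ≤ φ (‖x i t - x j t‖ ^ 2))
    (hψ : ∀ t ∈ Icc 0 T, ∀ i j, i ≠ j →
      HasDerivAt ψ (ψ' (‖x i t - x j t‖ ^ 2)) (‖x i t - x j t‖ ^ 2))
    (hψ' : ∀ t ∈ Icc 0 T, ∀ i j, i ≠ j → |ψ' (‖x i t - x j t‖ ^ 2)| ≤ g)
    (hR : ∀ t ∈ Icc 0 T, ∀ i j, ‖x i t - x j t‖ ≤ R) :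
    velocityFluctuation (fun i => v i T) +
        c₀ * Fintype.card ι * ∫ t in (0)..T, velocityFluctuation (fun i => v i t) ≤
      velocityFluctuation (fun i => v i 0) +
        (interactionEnergy ψ (fun i => x i T) - interactionEnergy ψ (fun i => x i 0)) / 2 := by
  obtain ⟨c, hc⟩ : ∃ c : E, ∑ i, v i 0 = (Fintype.card ι : ℝ) • c :=
    ⟨(Fintype.card ι : ℝ)⁻¹ • ∑ i, v i 0, by
      rw [smul_smul, mul_inv_cancel₀ (by positivity), one_smul]⟩
  have hsum : ∀ t, 0 ≤ t → ∑ i, v i t = (Fintype.card ι : ℝ) • c := fun t ht =>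
    (h.sum_velocity_eq ht).trans hc
  have hfluct : ∀ t, 0 ≤ t →
      velocityFluctuation (fun i => v i t) = √(∑ i, ‖v i t - c‖ ^ 2) := fun t ht =>
    velocityFluctuation_eq_of_sum_eq (hsum t ht)
  have hP : ∀ t ∈ Icc 0 T, HasDerivAt (fun s => interactionEnergy ψ fun i => x i s)
      (∑ i, ∑ j, ψ' (‖x i t - x j t‖ ^ 2) * ⟪x i t - x j t, v i t - v j t⟫) t := fun t ht =>
    hasDerivAt_interactionEnergy (fun i => (h t ht.1 i).1) (hψ t ht)
  have hR₀ : 0 ≤ R := (norm_nonneg _).trans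
    (hR 0 (left_mem_Icc.2 hT) (Classical.arbitrary ι) (Classical.arbitrary ι))
  rw [hfluct T hT, hfluct 0 le_rfl,
    intervalIntegral.integral_congr fun t ht => hfluct t (uIcc_of_le hT ▸ ht).1]
  exact sqrt_add_mul_integral_le (C := Fintype.card ι ^ 2 * (2 * g * R)) hT (by positivity)
    (by positivity)
    (fun t ht => (h.hasDerivAt_sum_norm_sub_sq hc ht.1).continuousAt.continuousWithinAt)
    (fun t ht => (hP t ht).continuousAt.continuousWithinAt)
    (fun t _ => Finset.sum_nonneg fun i _ => sq_nonneg _)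
    (fun t ht => h.hasDerivAt_sum_norm_sub_sq hc ht.1.le)
    (fun t ht => hP t (Ioo_subset_Icc_self ht))
    (fun t ht => mul_sum_norm_sub_sq_le_sum_sum (hφ t (Ioo_subset_Icc_self ht)) (hsum t ht.1.le))
    (fun t ht => abs_sum_sum_mul_inner_le c hg (hψ' t (Ioo_subset_Icc_self ht))
      (hR t (Ioo_subset_Icc_self ht)))

theorem exists_energy_le [Nonempty ι] [DecidableEq ι] (h : IsFlockingSolution φ ψ' x v)
    {ψ : ℝ → ℝ} {d₀ d₁ r₀ r₁ : ℝ} (hφ_cont : ContinuousOn φ (Ici 0))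
    (hφ_pos : ∀ r, 0 ≤ r → 0 < φ r) (hψ : ∀ r ∈ Ioo d₀ d₁, HasDerivAt ψ (ψ' r) r)
    (hψ'_cont : ContinuousOn ψ' (Ioo d₀ d₁)) (hr₀ : d₀ < r₀) (hr₁ : r₁ < d₁) :
    ∃ c₀ > 0, ∀ T, 0 ≤ T →
      (∀ t ∈ Icc 0 T, ∀ i j, i ≠ j → ‖x i t - x j t‖ ^ 2 ∈ Icc r₀ r₁) →
      velocityFluctuation (fun i => v i T) +
          c₀ * Fintype.card ι * ∫ t in (0)..T, velocityFluctuation (fun i => v i t) ≤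
        velocityFluctuation (fun i => v i 0) +
          (interactionEnergy ψ (fun i => x i T) - interactionEnergy ψ (fun i => x i 0)) / 2 := by
  have hsub : Icc r₀ r₁ ⊆ Ioo d₀ d₁ := Icc_subset_Ioo hr₀ hr₁
  obtain ⟨c₀, hc₀, hc₀φ⟩ := isCompact_Icc.exists_forall_le' (s := Icc 0 r₁)
    (hφ_cont.mono Icc_subset_Ici_self) fun r hr => hφ_pos r hr.1
  obtain ⟨g, hg⟩ := isCompact_Icc.exists_bound_of_continuousOn (hψ'_cont.mono hsub)
  refine ⟨c₀, hc₀, fun T hT hconf => h.energy_le (g := max g 0) (R := √r₁) hT hc₀.le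
    (le_max_right _ _) (fun t ht i j hij => hc₀φ _ ⟨sq_nonneg _, (hconf t ht i j hij).2⟩)
    (fun t ht i j hij => hψ _ (hsub (hconf t ht i j hij)))
    (fun t ht i j hij => (hg _ (hconf t ht i j hij)).trans (le_max_left _ _))
    fun t ht i j => ?_⟩
  rcases eq_or_ne i j with rfl | hij
  · simp
  · exact Real.le_sqrt_of_sq_le (hconf t ht i j hij).2

theorem exists_forall_norm_sub_sq_mem_Icc [Nonempty ι] (h : IsFlockingSolution φ ψ' x v)
    {ψ : ℝ → ℝ} {d₀ d₁ : ℝ} (hφ_cont : ContinuousOn φ (Ici 0)) (hφ_pos : ∀ r, 0 ≤ r → 0 < φ r)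
    (hψ : ∀ r ∈ Ioo d₀ d₁, HasDerivAt ψ (ψ' r) r) (hψ'_cont : ContinuousOn ψ' (Ioo d₀ d₁))
    (hψ_nonpos : ∀ r ∈ Ioo d₀ d₁, ψ r ≤ 0) (hψ₀ : Tendsto ψ (𝓝[>] d₀) atBot)
    (hψ₁ : Tendsto ψ (𝓝[<] d₁) atBot) (h₀ : ∀ i j, i ≠ j → ‖x i 0 - x j 0‖ ^ 2 ∈ Ioo d₀ d₁) :
    ∃ r₀ r₁, d₀ < r₀ ∧ r₁ < d₁ ∧
      ∀ t, 0 ≤ t → ∀ i j, i ≠ j → ‖x i t - x j t‖ ^ 2 ∈ Icc r₀ r₁ := by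
  classical
  set F := fun t => velocityFluctuation fun i => v i t
  set P := fun t => interactionEnergy ψ fun i => x i t
  obtain ⟨r₀, r₁, hr₀, hr₁, hlevel⟩ :=
    exists_Ioo_of_le_of_tendsto_atBot hψ₀ hψ₁ (2 * (P 0 - 2 * F 0))
  obtain ⟨c₀, hc₀, henergy⟩ := h.exists_energy_le hφ_cont hφ_pos hψ hψ'_cont hr₀ hr₁
  have hkeep : ∀ t, (∀ i j, i ≠ j → ‖x i t - x j t‖ ^ 2 ∈ Ioo d₀ d₁) → P 0 - 2 * F 0 ≤ P t →
      ∀ i j, i ≠ j → ‖x i t - x j t‖ ^ 2 ∈ Ioo r₀ r₁ := fun t ht hPt i j hij =>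
    hlevel _ (ht i j hij) (by
      linarith [two_mul_interactionEnergy_le (fun i j hij => hψ_nonpos _ (ht i j hij)) hij])
  refine ⟨r₀, r₁, hr₀, hr₁, fun t ht i j hij => Ioo_subset_Icc_self <|
    forall_mem_of_forall_Icc_mem (γ := fun t i => x i t)
      (U := {p | ∀ i j, i ≠ j → ‖p i - p j‖ ^ 2 ∈ Ioo r₀ r₁})
      (F := {p | ∀ i j, i ≠ j → ‖p i - p j‖ ^ 2 ∈ Icc r₀ r₁}) ?_ ?_ ?_
      (fun p hp i j hij => Ioo_subset_Icc_self (hp i j hij)) ?_ ?_ t ht i j hij⟩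
  · exact continuousOn_pi.2 fun i s hs => (h s hs i).1.continuousAt.continuousWithinAt
  · simp only [ofPred_forall]
    exact isOpen_iInter_of_finite fun i => isOpen_iInter_of_finite fun j =>
      isOpen_iInter_of_finite fun _ => isOpen_Ioo.preimage (by fun_prop)
  · simp only [ofPred_forall]
    exact isClosed_iInter fun i => isClosed_iInter fun j =>
      isClosed_iInter fun _ => isClosed_Icc.preimage (by fun_prop)
  · exact hkeep 0 h₀ (by linarith [(velocityFluctuation_nonneg : 0 ≤ F 0)])
  · intro T hT hconf
    have hE : F T + c₀ * Fintype.card ι * ∫ t in (0)..T, F t ≤ F 0 + (P T - P 0) / 2 :=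
      henergy T hT hconf
    have hint : 0 ≤ c₀ * Fintype.card ι * ∫ t in (0)..T, F t := mul_nonneg (by positivity)
      (intervalIntegral.integral_nonneg hT fun t _ => velocityFluctuation_nonneg)
    refine hkeep T (fun i j hij => Icc_subset_Ioo hr₀ hr₁ (hconf T ⟨hT, le_rfl⟩ i j hij)) ?_
    linarith [(velocityFluctuation_nonneg : 0 ≤ F T)]

theorem integrableOn_velocityFluctuation [Nonempty ι] (h : IsFlockingSolution φ ψ' x v)
    {ψ : ℝ → ℝ} {d₀ d₁ : ℝ} (hφ_cont : ContinuousOn φ (Ici 0)) (hφ_pos : ∀ r, 0 ≤ r → 0 < φ r)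
    (hψ : ∀ r ∈ Ioo d₀ d₁, HasDerivAt ψ (ψ' r) r) (hψ'_cont : ContinuousOn ψ' (Ioo d₀ d₁))
    (hψ_nonpos : ∀ r ∈ Ioo d₀ d₁, ψ r ≤ 0) (hψ₀ : Tendsto ψ (𝓝[>] d₀) atBot)
    (hψ₁ : Tendsto ψ (𝓝[<] d₁) atBot) (h₀ : ∀ i j, i ≠ j → ‖x i 0 - x j 0‖ ^ 2 ∈ Ioo d₀ d₁) :
    IntegrableOn (fun t => velocityFluctuation fun i => v i t) (Ici 0) := by
  classical
  obtain ⟨r₀, r₁, hr₀, hr₁, hconf⟩ := h.exists_forall_norm_sub_sq_mem_Icc hφ_cont hφ_pos hψ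
    hψ'_cont hψ_nonpos hψ₀ hψ₁ h₀
  obtain ⟨c₀, hc₀, henergy⟩ := h.exists_energy_le hφ_cont hφ_pos hψ hψ'_cont hr₀ hr₁
  set F := fun t => velocityFluctuation fun i => v i t
  set P := fun t => interactionEnergy ψ fun i => x i t
  have hcN : 0 < c₀ * Fintype.card ι := by positivity
  refine integrableOn_Ici_of_intervalIntegral_le (M := (F 0 - P 0 / 2) / (c₀ * Fintype.card ι))
    (continuous_velocityFluctuation.comp_continuousOn
      (continuousOn_pi.2 fun i s hs => (h s hs i).2.continuousAt.continuousWithinAt))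
    (fun t _ => velocityFluctuation_nonneg) fun T hT => ?_
  have hE : F T + c₀ * Fintype.card ι * ∫ t in (0)..T, F t ≤ F 0 + (P T - P 0) / 2 :=
    henergy T hT fun t ht => hconf t ht.1
  have hPT : P T ≤ 0 := interactionEnergy_nonpos fun i j hij =>
    hψ_nonpos _ (Icc_subset_Ioo hr₀ hr₁ (hconf T hT i j hij))
  rw [le_div_iff₀ hcN]
  linarith [(velocityFluctuation_nonneg : 0 ≤ F T)]

end IsFlockingSolution

theorem stmt_11_general
    {n k : ℕ} (hk : 2 ≤ k)
    (K σ β d0 d1 : ℝ) (θ : ℕ)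
    (hK : 0 < K) (hσ : 0 < σ)
    (hd01 : d0 < d1) (hθ2 : 2 ≤ θ) (hθeven : Even θ)
    (x v : Fin k → ℝ → EuclideanSpace ℝ (Fin n))
    (f0 f1 : ℝ → ℝ)
    (hf0 : ∀ r, f0 r = ((r - d0) ^ θ)⁻¹)
    (hf1 : ∀ r, f1 r = ((r - d1) ^ θ)⁻¹)
    (a : Fin k → Fin k → ℝ → ℝ)
    (ha : ∀ i j t, a i j t = K / (σ ^ 2 + ‖x i t - x j t‖ ^ 2) ^ β)
    (Λ : ℝ → ℝ)
    (hΛ : ∀ t, Λ t = Real.sqrt ((1 / (k : ℝ)) *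
      ∑ i : Fin k, ∑ j ∈ Finset.univ.filter (fun j => j < i), ‖v i t - v j t‖ ^ 2))
    (hx : ∀ i, ∀ t : ℝ, 0 ≤ t → HasDerivAt (x i) (v i t) t)
    (hv : ∀ i, ∀ t : ℝ, 0 ≤ t → HasDerivAt (v i)
      ((∑ j : Fin k, a i j t • (v j t - v i t)) +
        Λ t • (∑ j ∈ Finset.univ.filter (fun j => j ≠ i),
          f0 (‖x i t - x j t‖ ^ 2) • (x i t - x j t)) +
        Λ t • (∑ j ∈ Finset.univ.filter (fun j => j ≠ i),
          f1 (‖x i t - x j t‖ ^ 2) • (x j t - x i t))) t)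
    (hinit : ∀ i j : Fin k, i ≠ j →
      d0 < ‖x i 0 - x j 0‖ ^ 2 ∧ ‖x i 0 - x j 0‖ ^ 2 < d1)
    (vbar : ℝ → EuclideanSpace ℝ (Fin n))
    (hvbar : ∀ t, vbar t = (k : ℝ)⁻¹ • ∑ i : Fin k, v i t)
    (V : ℝ → ℝ)
    (hV : ∀ t, V t = Real.sqrt (∑ i : Fin k, ‖v i t - vbar t‖ ^ 2))
    :
    MeasureTheory.IntegrableOn V (Set.Ici (0 : ℝ)) := by
  obtain ⟨m, rfl⟩ : ∃ m, θ = m + 1 := ⟨θ - 1, by omega⟩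
  have hm : Odd m := Nat.not_even_iff_odd.1 (Nat.even_add_one.1 hθeven)
  have : Nonempty (Fin k) := ⟨⟨0, by omega⟩⟩
  have hf : ∀ r, ((r - d0) ^ (m + 1))⁻¹ - ((r - d1) ^ (m + 1))⁻¹ = f0 r - f1 r := fun r => by
    rw [hf0, hf1]
  have hΛV : ∀ t, Λ t = velocityFluctuation fun i => v i t := fun t => by
    rw [hΛ, velocityFluctuation_eq_sqrt_sum_sum_lt, Fintype.card_fin]
  have hσr : ∀ r ∈ Ici (0 : ℝ), 0 < σ ^ 2 + r := fun r hr => by positivity [hr.out]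
  have hsol : IsFlockingSolution (fun r => K / (σ ^ 2 + r) ^ β) (fun r => f0 r - f1 r) x v :=
    fun t ht i => ⟨hx i t ht, (hv i t ht).congr_deriv <| by
      rw [add_assoc, ← smul_add, sum_filter_ne_smul_sub_add_sum_filter_ne_smul_sub
          (fun j => f0 (‖x i t - x j t‖ ^ 2)) (fun j => f1 (‖x i t - x j t‖ ^ 2)) (x · t), hΛV,
        flockingForce]
      simp only [ha]⟩
  rw [show V = fun t => velocityFluctuation fun i => v i t from
    funext fun t => by simp [velocityFluctuation, hV, hvbar]]
  exact hsol.integrableOn_velocityFluctuation (ψ := pairPotential m d0 d1)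
    (continuousOn_const.div (ContinuousOn.rpow_const (by fun_prop) fun r hr => .inl (hσr r hr).ne')
      fun r hr => (Real.rpow_pos_of_pos (hσr r hr) β).ne')
    (fun r hr => div_pos hK (Real.rpow_pos_of_pos (hσr r hr) β))
    (fun r hr => hf r ▸ hasDerivAt_pairPotential hm.pos.ne' hr.1.ne' hr.2.ne)
    (by simpa only [hf] using
      continuousOn_inv_pow_sub_sub_inv_pow_sub (m := m + 1) (d₀ := d0) (d₁ := d1))
    (fun r hr => pairPotential_nonpos hm hr) (tendsto_pairPotential_nhdsGT hm hd01)
    (tendsto_pairPotential_nhdsLT hm hd01) hinit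

theorem stmt_11
    {n k : ℕ} (hn : 1 ≤ n) (hk : 2 ≤ k)
    (K σ β d0 d1 : ℝ) (θ : ℕ)
    (hK : 0 < K) (hσ : 0 < σ) (hβ0 : 0 < β) (hβ : β ≤ 1 / 2)
    (hd0 : 0 < d0) (hd01 : d0 < d1) (hθ2 : 2 ≤ θ) (hθeven : Even θ)
    (x v : Fin k → ℝ → EuclideanSpace ℝ (Fin n))
    (f0 f1 : ℝ → ℝ)
    (hf0 : ∀ r, f0 r = ((r - d0) ^ θ)⁻¹)
    (hf1 : ∀ r, f1 r = ((r - d1) ^ θ)⁻¹)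
    (a : Fin k → Fin k → ℝ → ℝ)
    (ha : ∀ i j t, a i j t = K / (σ ^ 2 + ‖x i t - x j t‖ ^ 2) ^ β)
    (Λ : ℝ → ℝ)
    (hΛ : ∀ t, Λ t = Real.sqrt ((1 / (k : ℝ)) *
      ∑ i : Fin k, ∑ j ∈ Finset.univ.filter (fun j => j < i), ‖v i t - v j t‖ ^ 2))
    (hx : ∀ i, ∀ t : ℝ, 0 ≤ t → HasDerivAt (x i) (v i t) t)
    (hv : ∀ i, ∀ t : ℝ, 0 ≤ t → HasDerivAt (v i)
      ((∑ j : Fin k, a i j t • (v j t - v i t)) +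
        Λ t • (∑ j ∈ Finset.univ.filter (fun j => j ≠ i),
          f0 (‖x i t - x j t‖ ^ 2) • (x i t - x j t)) +
        Λ t • (∑ j ∈ Finset.univ.filter (fun j => j ≠ i),
          f1 (‖x i t - x j t‖ ^ 2) • (x j t - x i t))) t)
    (hinit : ∀ i j : Fin k, i ≠ j →
      d0 < ‖x i 0 - x j 0‖ ^ 2 ∧ ‖x i 0 - x j 0‖ ^ 2 < d1)
    (vbar : ℝ → EuclideanSpace ℝ (Fin n))
    (hvbar : ∀ t, vbar t = (k : ℝ)⁻¹ • ∑ i : Fin k, v i t)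
    (V : ℝ → ℝ)
    (hV : ∀ t, V t = Real.sqrt (∑ i : Fin k, ‖v i t - vbar t‖ ^ 2))
    :
    MeasureTheory.IntegrableOn V (Set.Ici (0 : ℝ)) :=
  stmt_11_general hk K σ β d0 d1 θ hK hσ hd01 hθ2 hθeven x v f0 f1 hf0 hf1 a ha Λ hΛ hx hv hinit
    vbar hvbar V hV
end
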